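/- Let A be a commutative ring, f ∈ A, and consider the ring homomorphism ρ : A → ∏_{𝔭 ∈ D(f)} A_𝔭 given by the product of localization maps. Every element of the subring of the product generated by ρ(A) together with the inverses ρ(b)^{-1} for those b ∈ A with ρ(b) invertible, lies in the image of the canonical map A_f → ∏_{𝔭 ∈ D(f)} A_𝔭. In particular, that subring is isomorphic to A_f. -/

import Mathlib

/-!
The map `Φ` restricts to `ρ` along `A → A_f`. If `ρ b` is invertible then `b` lies in no prime
of `D(f)`, so `D(f) ⊆ D(b)` and `b` is already a unit in `A_f`; hence every generator of `S` lies
in `Φ(A_f)`, and conversely `Φ(a / s) = ρ a · (ρ s)⁻¹` is a product of generators. Finally `Φ` is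
injective: if `a / 1` vanishes in every `A_𝔭` with `𝔭 ∈ D(f)`, then `Ann(a)` lies in no such
prime, so `f` is in the radical of `Ann(a)` and `a / 1 = 0` in `A_f`.
-/

/-- The index type of primes in the basic open set `D(f)`. -/
abbrev Df (A : Type*) [CommRing A] (f : A) : Type _ :=
  {p : PrimeSpectrum A // p ∈ PrimeSpectrum.basicOpen f}

open PrimeSpectrum

lemma algebraMap_away_eq_zero_of_forall_atPrime {A : Type*} [CommRing A] {f a : A}
    (h : ∀ p ∈ basicOpen f, algebraMap A (Localization.AtPrime p.asIdeal) a = 0) :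
    algebraMap A (Localization.Away f) a = 0 := by
  have hf : Ideal.span {f} ≤ (Ideal.torsionOf A A a).radical := by
    rw [← zeroLocus_subset_zeroLocus_iff, zeroLocus_span]
    intro p hp
    by_contra hfp
    obtain ⟨s, hs⟩ := (IsLocalization.map_eq_zero_iff p.asIdeal.primeCompl _ a).mp
      (h p ((mem_basicOpen f p).mpr fun hf => hfp (by simpa using hf)))
    exact s.2 (hp hs)
  obtain ⟨n, hn⟩ := hf (Ideal.mem_span_singleton_self f)
  exact (IsLocalization.map_eq_zero_iff (.powers f) _ a).mpr ⟨⟨f ^ n, n, rfl⟩, hn⟩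

theorem IsLocalization.Away.range_eq_closure {A S B : Type*} [CommRing A] [CommRing S]
    [CommRing B] [Algebra A S] (f : A) [IsLocalization.Away f S]
    {φ : S →+* B} {g : A →+* B}
    (hφ : φ.comp (algebraMap A S) = g)
    (hunit : ∀ b, IsUnit (g b) → IsUnit (algebraMap A S b)) :
    φ.range = Subring.closure (Set.range g ∪ {x | ∃ b, IsUnit (g b) ∧ x * g b = 1}) := by
  subst hφ
  apply le_antisymm
  · rintro _ ⟨z, rfl⟩
    obtain ⟨⟨a, s⟩, rfl⟩ := IsLocalization.mk'_surjective (.powers f) z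
    have hinv : φ (IsLocalization.mk' S 1 s) * φ (algebraMap A S s) = 1 := by
      rw [← map_mul, IsLocalization.mk'_spec, map_one, map_one]
    dsimp only
    rw [IsLocalization.mk'_eq_mul_mk'_one, map_mul]
    exact Subring.mul_mem _ (Subring.subset_closure (Or.inl ⟨a, rfl⟩))
      (Subring.subset_closure (Or.inr ⟨s, IsUnit.of_mul_eq_one_right _ hinv, hinv⟩))
  · refine Subring.closure_le.mpr ?_
    rintro _ (⟨a, rfl⟩ | ⟨b, hb, hx⟩)
    · exact ⟨algebraMap A S a, rfl⟩
    · refine ⟨↑(hunit b hb).unit⁻¹, ?_⟩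
      refine left_inv_eq_right_inv ?_ (by rwa [mul_comm] at hx)
      rw [RingHom.comp_apply, ← map_mul, IsUnit.val_inv_mul, map_one]

set_option maxHeartbeats 1000000 in
theorem subring_gen_by_image_and_inverses_eq_image_away
    (A : Type*) [CommRing A] (f : A)
    (ρ : A →+* ∀ p : Df A f, Localization.AtPrime p.1.asIdeal)
    (hρ : ρ = Pi.ringHom (fun p : Df A f =>
      algebraMap A (Localization.AtPrime p.1.asIdeal)))
    (Φ : Localization.Away f →+* ∀ p : Df A f, Localization.AtPrime p.1.asIdeal)
    (hΦ : Φ = Pi.ringHom (fun p : Df A f =>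
      Localization.awayLift (algebraMap A (Localization.AtPrime p.1.asIdeal)) f
        (IsLocalization.map_units (M := p.1.asIdeal.primeCompl) _
          ⟨f, (PrimeSpectrum.mem_basicOpen f p.1).mp p.2⟩)))
    (S : Subring (∀ p : Df A f, Localization.AtPrime p.1.asIdeal))
    (hS : S = Subring.closure
      (Set.range ρ ∪ {x | ∃ b : A, IsUnit (ρ b) ∧ x * ρ b = 1})) :
    (∀ x ∈ S, x ∈ Φ.range) ∧ Nonempty (Localization.Away f ≃+* S) := by
  have hcomp : Φ.comp (algebraMap A (Localization.Away f)) = ρ := by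
    subst hΦ hρ
    ext a p
    exact IsLocalization.lift_eq _ a
  have hunit (b : A) (hb : IsUnit (ρ b)) : IsUnit (algebraMap A (Localization.Away f) b) :=
    basicOpen_le_basicOpen_iff_algebraMap_isUnit.mp fun p hp => (mem_basicOpen b p).mpr <|
      (IsLocalization.AtPrime.isUnit_to_map_iff _ p.asIdeal b).mp (hρ ▸ hb.apply ⟨p, hp⟩)
  have hinj : Function.Injective Φ :=
    IsLocalization.injective_of_map_algebraMap_zero (M := Submonoid.powers f) _ Φ fun a ha =>
      algebraMap_away_eq_zero_of_forall_atPrime fun p hp => by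
        rw [← RingHom.comp_apply, hcomp, hρ] at ha
        exact congrFun ha ⟨p, hp⟩
  obtain rfl : S = Φ.range := hS.trans (IsLocalization.Away.range_eq_closure f hcomp hunit).symm
  exact ⟨fun _ => id, ⟨RingEquiv.ofLeftInverse (Function.leftInverse_invFun hinj)⟩⟩
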